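/- Let G = (V, E) be a graph with n vertices, let α, δ_t, δ_a ∈ [0,1] be constants, and let K_t, K_a be nonnegative integers such that (1 − α)·δ_t·n·p ≥ K_a ≥ K_t, where p = |E| / C(n,2). If the minimum degree d of G satisfies d − ⌊α·d⌋ ≥ K_t, then for every graph property P, if G is (α, δ_t, K_t, δ_a, K_a)-resilient with respect to P then G is α-resilient with respect to P. -/
import Mathlib


open MeasureTheory Filter ENNReal

namespace RGP

noncomputable section

variable {V : Type*}

/-- The degree of a vertex. -/
def deg (G : SimpleGraph V) (v : V) : ℕ := (G.neighborSet v).ncard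

/-- `N^ℓ_G(v)`: vertices at distance at most `ℓ` from `v`, excluding `v`. -/
def nbhd (G : SimpleGraph V) (ℓ : ℕ) (v : V) : Set V :=
  {u | u ≠ v ∧ ∃ p : G.Walk v u, p.length ≤ ℓ}

/-- `TINY_{p,δ}(G)`. -/
def TINY (G : SimpleGraph V) (p δ : ℝ) : Set V :=
  {v | (deg G v : ℝ) < δ * (Nat.card V) * p}

/-- `ATYP_{p,δ}(G)`. -/
def ATYP (G : SimpleGraph V) (p δ : ℝ) : Set V :=
  {v | (deg G v : ℝ) < (1 - δ) * (Nat.card V) * p ∨ (1 + δ) * (Nat.card V) * p < (deg G v : ℝ)}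

/-- Edge density `|E| / C(n,2)`. -/
def density (G : SimpleGraph V) : ℝ :=
  (G.edgeSet.ncard : ℝ) / ((Nat.card V).choose 2 : ℕ)

/-- A matching covering all but at most one vertex. -/
def HasNearPerfectMatching (G : SimpleGraph V) : Prop :=
  ∃ M : G.Subgraph, M.IsMatching ∧ (M.vertsᶜ).ncard ≤ 1

/-- Hamiltonicity (for finite vertex types). -/
def IsHam [Finite V] (G : SimpleGraph V) : Prop :=
  letI := Classical.decEq V; letI := Fintype.ofFinite V; G.IsHamiltonian

/-- `α`-resilience with respect to a property `P`. -/
def Resilient (G : SimpleGraph V) (α : ℝ) (P : SimpleGraph V → Prop) : Prop :=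
  ∀ H : SimpleGraph V, H ≤ G → (∀ v, (deg H v : ℝ) ≤ α * (deg G v : ℝ)) → P (G \ H)

/-- `(α, δt, Kt, δa, Ka)`-resilience with respect to a property `P`. -/
def StrongResilient (G : SimpleGraph V) (α δt : ℝ) (Kt : ℕ) (δa : ℝ) (Ka : ℕ)
    (P : SimpleGraph V → Prop) : Prop :=
  ∀ H : SimpleGraph V, H ≤ G →
    (∀ v ∈ TINY G (density G) δt, (deg H v : ℝ) ≤ (deg G v : ℝ) - Kt) →
    (∀ v, v ∈ ATYP G (density G) δa → v ∉ TINY G (density G) δt →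
      (deg H v : ℝ) ≤ (deg G v : ℝ) - Ka) →
    (∀ v, v ∉ TINY G (density G) δt → v ∉ ATYP G (density G) δa →
      (deg H v : ℝ) ≤ α * (deg G v : ℝ)) →
    P (G \ H)

/-! ### The random graph process -/

/-- Potential edges of the complete graph on `Fin n`. -/
abbrev EdgeType (n : ℕ) := {e : Sym2 (Fin n) // ¬ e.IsDiag}

/-- A sample point of the random graph process: a uniformly random ordering of the edges. -/
abbrev ProcessSpace (n : ℕ) := Fin (Fintype.card (EdgeType n)) ≃ EdgeType n

instance (n : ℕ) : MeasurableSpace (ProcessSpace n) := ⊤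

/-- The uniform measure on orderings of the edges of `K_n`. -/
def processMeasure (n : ℕ) : Measure (ProcessSpace n) :=
  (Fintype.card (ProcessSpace n) : ℝ≥0∞)⁻¹ • Measure.sum (fun σ => Measure.dirac σ)

/-- The graph `G_m` of the process: the first `m` edges in the random ordering. -/
def processGraph {n : ℕ} (σ : ProcessSpace n) (m : ℕ) : SimpleGraph (Fin n) :=
  SimpleGraph.fromEdgeSet {e | ∃ i : Fin (Fintype.card (EdgeType n)), (i : ℕ) < m ∧ (σ i : Sym2 (Fin n)) = e}

/-! ### The binomial random graph G(n,p) -/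

abbrev GnpSpace (n : ℕ) := EdgeType n → Bool

/-- The Bernoulli product weight of an outcome. -/
def gnpWeight {n : ℕ} (p : ℝ) (ω : GnpSpace n) : ℝ≥0∞ :=
  ∏ e : EdgeType n, (if ω e then ENNReal.ofReal p else ENNReal.ofReal (1 - p))

/-- The `G(n,p)` probability measure. -/
def gnp (n : ℕ) (p : ℝ) : Measure (GnpSpace n) :=
  Measure.sum (fun ω => gnpWeight p ω • Measure.dirac ω)

/-- The graph determined by an outcome of `G(n,p)`. -/
def gnpGraph {n : ℕ} (ω : GnpSpace n) : SimpleGraph (Fin n) :=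
  SimpleGraph.fromEdgeSet {e | ∃ h : ¬ e.IsDiag, ω ⟨e, h⟩ = true}

/-- Joint distribution of two independent binomial random graphs. -/
def gnp2 (n : ℕ) (p₀ p' : ℝ) : Measure (GnpSpace n × GnpSpace n) :=
  Measure.sum (fun ω : GnpSpace n × GnpSpace n =>
    (gnpWeight p₀ ω.1 * gnpWeight p' ω.2) • Measure.dirac ω)

/-! ### The 2-core -/

/-- The vertex set of the 2-core: the largest set every vertex of which has
at least two neighbours inside the set. -/
def coreSet (G : SimpleGraph V) : Set V :=
  ⋃₀ {S : Set V | ∀ v ∈ S, 2 ≤ ((G.neighborSet v) ∩ S).ncard}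

/-- The 2-core of a graph, as a graph on the corresponding vertex subset. -/
def twoCore (G : SimpleGraph V) : SimpleGraph (coreSet G) := G.induce (coreSet G)


theorem statement_4 {V : Type*} [Fintype V] (G : SimpleGraph V) (α δt δa : ℝ)
    (Kt Ka : ℕ) (P : SimpleGraph V → Prop) (d : ℕ)
    (hdmin : IsLeast (Set.range (deg G)) d)
    (hα : α ∈ Set.Icc (0 : ℝ) 1) (hδt : δt ∈ Set.Icc (0 : ℝ) 1)
    (hδa : δa ∈ Set.Icc (0 : ℝ) 1)
    (hKtKa : Kt ≤ Ka)
    (hKa : (Ka : ℝ) ≤ (1 - α) * δt * (Nat.card V) * density G)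
    (hd : (Kt : ℝ) ≤ (d : ℝ) - ((⌊α * (d : ℝ)⌋ : ℤ) : ℝ))
    (hres : StrongResilient G α δt Kt δa Ka P) :
    Resilient G α P := by
  intro H hHG hdeg
  apply hres H hHG
  · intro v _
    have hdv : (d : ℝ) ≤ (deg G v : ℝ) := by
      exact_mod_cast hdmin.2 ⟨v, rfl⟩
    have h1 : ⌊α * (deg G v : ℝ)⌋ ≤ ⌊α * (d : ℝ)⌋ + ((deg G v : ℤ) - (d : ℤ)) := by
      rw [← Int.floor_add_intCast]
      apply Int.floor_le_floor
      push_cast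
      nlinarith [hα.1, hα.2]
    have h1' : (⌊α * (deg G v : ℝ)⌋ : ℝ) ≤ (⌊α * (d : ℝ)⌋ : ℝ) + ((deg G v : ℝ) - (d : ℝ)) := by
      exact_mod_cast h1
    have h3 : (deg H v : ℝ) ≤ (⌊α * (deg G v : ℝ)⌋ : ℝ) := by
      exact_mod_cast Int.le_floor.mpr (by exact_mod_cast hdeg v)
    linarith
  · intro v _ hvT
    have hnt : δt * (Nat.card V) * density G ≤ (deg G v : ℝ) := not_lt.mp hvT
    have h1 : (0 : ℝ) ≤ 1 - α := by linarith [hα.2]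
    nlinarith [hdeg v, mul_le_mul_of_nonneg_left hnt h1]
  · intro v _ _
    exact hdeg v

end
end RGP
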